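/- Galvin's theorem for Sacks forcing: for any perfect subtree p of 2^{<ω} and any Baire measurable coloring c : [[p]]² → {0,1} of unordered pairs of branches of p, there is a perfect subtree q ⊆ p such that [q] is homogeneous for c (c is constant on [[q]]²). -/

import Mathlib

def IsTree (T : Set (List Bool)) : Prop :=
  ∀ s ∈ T, ∀ t : List Bool, t <+: s → t ∈ T

def Splits (T : Set (List Bool)) (t : List Bool) : Prop :=
  t ∈ T ∧ t ++ [false] ∈ T ∧ t ++ [true] ∈ T

def PerfectTree (T : Set (List Bool)) : Prop :=
  T.Nonempty ∧ IsTree T ∧ ∀ s ∈ T, ∃ t, s <+: t ∧ Splits T t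

def branches (T : Set (List Bool)) : Set (ℕ → Bool) :=
  {x | ∀ n : ℕ, (List.ofFn fun i : Fin n => x i) ∈ T}

/-!
Since `[p] × [p]` is compact, the set `A` of pairs coloured `true` agrees with an open set `U`,
and its complement with an open set `V`, on a dense Gδ set `D = ⋂ gₖ`. A fusion argument
produces a perfect subtree of `p`, the downward closure of a scheme `e : 2^{<ω} → p`, in which
the box spanned by two distinct nodes of level `n` lies in `g₀ ∩ ⋯ ∩ gₙ₋₁` and inside `U` or
inside `V`. Then every pair of distinct branches lies in `D`, so its colour is decided by the box
at the node where the two branches split. Thinning the scheme once more so that this decision is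
the same at all splitting nodes gives a homogeneous perfect subtree.
-/

open Filter Topology Set

def initSeg (x : ℕ → Bool) (n : ℕ) : List Bool := List.ofFn fun i : Fin n => x i

@[simp] lemma length_initSeg (x : ℕ → Bool) (n : ℕ) : (initSeg x n).length = n := by
  simp [initSeg]

@[simp] lemma getElem_initSeg (x : ℕ → Bool) (n i : ℕ) (h : i < (initSeg x n).length) :
    (initSeg x n)[i] = x i := by
  simp [initSeg]

lemma initSeg_succ (x : ℕ → Bool) (n : ℕ) : initSeg x (n + 1) = initSeg x n ++ [x n] := by
  simp only [initSeg, List.ofFn_succ_last]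
  rfl

lemma initSeg_eq_initSeg_iff {x y : ℕ → Bool} {n : ℕ} :
    initSeg x n = initSeg y n ↔ ∀ i < n, x i = y i := by
  simp [initSeg, List.ofFn_inj, funext_iff, Fin.forall_iff]

lemma branches_mono {S T : Set (List Bool)} (h : S ⊆ T) : branches S ⊆ branches T :=
  fun _ hx n => h (hx n)

lemma Splits.append_singleton_mem {T : Set (List Bool)} {t : List Bool} (h : Splits T t)
    (i : Bool) : t ++ [i] ∈ T := by
  cases i
  exacts [h.2.1, h.2.2]

def cylinder (s : List Bool) : Set (ℕ → Bool) := {x | ∀ i (h : i < s.length), x i = s[i]}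

section Cylinder

variable {s t : List Bool} {x : ℕ → Bool} {n : ℕ}

lemma cylinder_anti (h : s <+: t) : cylinder t ⊆ cylinder s :=
  fun _ hx i hi => (hx i (hi.trans_le h.length_le)).trans (h.getElem hi).symm

lemma apply_length_of_mem_cylinder_append {i : Bool} (hx : x ∈ cylinder (s ++ [i])) :
    x s.length = i := by
  simpa using hx s.length (by simp)

lemma prefix_initSeg_of_mem_cylinder (hx : x ∈ cylinder s) (hn : s.length ≤ n) :
    s <+: initSeg x n :=
  List.prefix_iff_getElem.2 ⟨by simpa, fun i hi => by simp [hx i hi]⟩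

lemma initSeg_prefix_of_mem_cylinder (hx : x ∈ cylinder s) (hn : n ≤ s.length) :
    initSeg x n <+: s :=
  List.prefix_iff_getElem.2 ⟨by simpa, fun i hi => by simp at hi; simp [hx i (by omega)]⟩

lemma mem_cylinder_of_prefix_initSeg (h : s <+: initSeg x n) : x ∈ cylinder s :=
  fun i hi => by simpa using (h.getElem hi).symm

lemma mem_cylinder_initSeg (x : ℕ → Bool) (n : ℕ) : x ∈ cylinder (initSeg x n) :=
  fun i _ => by simp

lemma initSeg_prefix_initSeg (x : ℕ → Bool) {m n : ℕ} (h : m ≤ n) :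
    initSeg x m <+: initSeg x n :=
  initSeg_prefix_of_mem_cylinder (mem_cylinder_initSeg x n) (by simpa)

lemma cylinder_initSeg (x : ℕ → Bool) (n : ℕ) :
    cylinder (initSeg x n) = PiNat.cylinder x n := by
  ext y
  simp [cylinder, PiNat.cylinder]

lemma isOpen_cylinder (s : List Bool) : IsOpen (cylinder s) := by
  refine isOpen_iff_forall_mem_open.2 fun x hx => ⟨PiNat.cylinder x s.length, ?_,
    PiNat.isOpen_cylinder _ x _, PiNat.self_mem_cylinder x _⟩
  exact fun y hy i hi => (hy i hi).trans (hx i hi)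

lemma hasBasis_nhds_cylinder (x : ℕ → Bool) :
    (𝓝 x).HasBasis (fun _ : ℕ => True) fun n => cylinder (initSeg x n) := by
  refine ⟨fun W => ⟨fun hW => ?_, fun ⟨n, _, hn⟩ => mem_of_superset
    ((isOpen_cylinder _).mem_nhds (mem_cylinder_initSeg x n)) hn⟩⟩
  obtain ⟨_, ⟨y, n, rfl⟩, hxy, hW⟩ :=
    (PiNat.isTopologicalBasis_cylinders _).mem_nhds_iff.1 hW
  exact ⟨n, trivial, by rwa [cylinder_initSeg, PiNat.mem_cylinder_iff_eq.1 hxy]⟩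

lemma exists_forall_mem_cylinder {u : ℕ → List Bool} (hu : ∀ k, u k <+: u (k + 1))
    (hlen : ∀ k, k ≤ (u k).length) : ∃ x, ∀ k, x ∈ cylinder (u k) := by
  have hchain : ∀ j k, j ≤ k → u j <+: u k := fun j k hjk =>
    Nat.le_induction (List.prefix_refl _) (fun k _ ih => ih.trans (hu k)) k hjk
  refine ⟨fun n => (u (n + 1)).getD n false, fun k i hi => ?_⟩
  have hi' : i < (u (i + 1)).length := hlen (i + 1)
  simp only [List.getD_eq_getElem _ _ hi']
  rcases le_total (i + 1) k with h | h
  · exact (hchain _ _ h).getElem hi'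
  · exact ((hchain _ _ h).getElem hi).symm

end Cylinder

lemma isClosed_branches (T : Set (List Bool)) : IsClosed (branches T) := by
  refine isOpen_compl_iff.1 <| isOpen_iff_forall_mem_open.2 fun x hx => ?_
  obtain ⟨n, hn⟩ := not_forall.1 hx
  refine ⟨PiNat.cylinder x n, fun y hy hyT => hn ?_, PiNat.isOpen_cylinder _ x n,
    PiNat.self_mem_cylinder x n⟩
  change initSeg x n ∈ T
  rw [← initSeg_eq_initSeg_iff.2 hy]
  exact hyT n

instance (T : Set (List Bool)) : CompactSpace (branches T) :=
  isCompact_iff_compactSpace.1 (isClosed_branches T).isCompact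

section PerfectTree

variable {p : Set (List Bool)}

lemma PerfectTree.exists_prefix_length_lt (hp : PerfectTree p) {s : List Bool} (hs : s ∈ p) :
    ∃ t ∈ p, s <+: t ∧ s.length < t.length := by
  obtain ⟨u, hsu, hu⟩ := hp.2.2 s hs
  exact ⟨u ++ [false], hu.2.1, hsu.trans (List.prefix_append _ _),
    by simpa using Nat.lt_succ_of_le hsu.length_le⟩

lemma PerfectTree.exists_mem_branches_cylinder (hp : PerfectTree p) {s : List Bool}
    (hs : s ∈ p) : ∃ x ∈ branches p, x ∈ cylinder s := by
  choose next hnext hpre hlt using fun t : p => hp.exists_prefix_length_lt t.2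
  let u : ℕ → p := fun k => (fun t : p => (⟨next t, hnext t⟩ : p))^[k] ⟨s, hs⟩
  have hu : ∀ k, (u k : List Bool) <+: u (k + 1) := fun k => by
    simp only [u, Function.iterate_succ_apply']
    exact hpre _
  have hlen : ∀ k, k ≤ (u k : List Bool).length := fun k => by
    induction k with
    | zero => exact Nat.zero_le _
    | succ k ih =>
      simp only [u, Function.iterate_succ_apply'] at ih ⊢
      exact ih.trans_lt (hlt _)
  obtain ⟨x, hx⟩ := exists_forall_mem_cylinder hu hlen
  exact ⟨x, fun n => hp.2.1 _ (u n).2 _ (initSeg_prefix_of_mem_cylinder (hx n) (hlen n)), hx 0⟩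

end PerfectTree

def IsPerfectScheme (e : List Bool → List Bool) : Prop :=
  ∀ σ (i : Bool), e σ ++ [i] <+: e (σ ++ [i])

def schemeTree (e : List Bool → List Bool) : Set (List Bool) := {t | ∃ σ, t <+: e σ}

lemma schemeTree_comp_subset (e f : List Bool → List Bool) :
    schemeTree (e ∘ f) ⊆ schemeTree e :=
  fun _ ⟨σ, h⟩ => ⟨f σ, h⟩

lemma schemeTree_subset {e : List Bool → List Bool} {p : Set (List Bool)} (hp : IsTree p)
    (hep : ∀ σ, e σ ∈ p) : schemeTree e ⊆ p :=
  fun t ⟨σ, hσ⟩ => hp _ (hep σ) t hσ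

namespace IsPerfectScheme

variable {e : List Bool → List Bool}

lemma mono (he : IsPerfectScheme e) {σ τ : List Bool} (h : σ <+: τ) : e σ <+: e τ := by
  obtain ⟨δ, rfl⟩ := h
  induction δ using List.reverseRecOn with
  | nil => simp
  | append_singleton δ i ih =>
    rw [← List.append_assoc]
    exact ih.trans ((List.prefix_append _ _).trans (he _ i))

lemma length_le (he : IsPerfectScheme e) (σ : List Bool) : σ.length ≤ (e σ).length := by
  induction σ using List.reverseRecOn with
  | nil => exact Nat.zero_le _
  | append_singleton σ i ih =>
    have := (he σ i).length_le
    simp only [List.length_append, List.length_singleton] at this ⊢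
    omega

lemma comp (he : IsPerfectScheme e) {f : List Bool → List Bool} (hf : IsPerfectScheme f) :
    IsPerfectScheme (e ∘ f) :=
  fun σ i => (he (f σ) i).trans (he.mono (hf σ i))

lemma perfectTree_schemeTree (he : IsPerfectScheme e) : PerfectTree (schemeTree e) :=
  ⟨⟨e [], [], List.prefix_refl _⟩, fun _ ⟨σ, hσ⟩ _ ht => ⟨σ, ht.trans hσ⟩,
    fun _ ⟨σ, hσ⟩ => ⟨e σ, hσ, ⟨σ, List.prefix_refl _⟩, ⟨σ ++ [false], he σ false⟩,
      ⟨σ ++ [true], he σ true⟩⟩⟩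

lemma apply_length_eq (he : IsPerfectScheme e) {σ : List Bool} {i : Bool} {x : ℕ → Bool}
    (hx : x ∈ cylinder (e (σ ++ [i]))) : x (e σ).length = i :=
  apply_length_of_mem_cylinder_append (cylinder_anti (he σ i) hx)

lemma eq_of_mem_cylinder (he : IsPerfectScheme e) {x : ℕ → Bool} {σ τ : List Bool}
    (hστ : σ.length = τ.length) (hσ : x ∈ cylinder (e σ)) (hτ : x ∈ cylinder (e τ)) : σ = τ := by
  induction σ using List.reverseRecOn generalizing τ with
  | nil => exact (List.length_eq_zero_iff.1 hστ.symm).symm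
  | append_singleton σ i ih =>
    obtain ⟨τ, j, rfl⟩ : ∃ τ' j, τ = τ' ++ [j] := by
      rcases τ.eq_nil_or_concat with rfl | ⟨τ', j, rfl⟩
      · simp at hστ
      · exact ⟨τ', j, by simp⟩
    have hσ' := cylinder_anti (he.mono (List.prefix_append σ [i])) hσ
    have hτ' := cylinder_anti (he.mono (List.prefix_append τ [j])) hτ
    obtain rfl := ih (by simpa using hστ) hσ' hτ'
    rw [← he.apply_length_eq hσ, ← he.apply_length_eq hτ]

lemma exists_mem_cylinder_of_length (he : IsPerfectScheme e) {x : ℕ → Bool}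
    (hx : x ∈ branches (schemeTree e)) (m : ℕ) :
    ∃ σ : List Bool, σ.length = m ∧ x ∈ cylinder (e σ) := by
  obtain ⟨N, hN⟩ : ∃ N, ∀ σ : List Bool, σ.length = m → (e σ).length ≤ N := by
    obtain ⟨N, hN⟩ := ((List.finite_length_eq Bool m).image fun σ => (e σ).length).bddAbove
    exact ⟨N, fun σ hσ => hN ⟨σ, hσ, rfl⟩⟩
  obtain ⟨τ, hτ⟩ := hx N
  let τ' := τ ++ List.replicate m false
  have hlen : (τ'.take m).length = m := by simp [τ']
  refine ⟨τ'.take m, hlen, mem_cylinder_of_prefix_initSeg (n := N) ?_⟩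
  exact List.prefix_of_prefix_length_le (he.mono (List.take_prefix _ _))
    (hτ.trans (he.mono (List.prefix_append _ _))) (by simpa using hN _ hlen)

lemma exists_code (he : IsPerfectScheme e) {x : ℕ → Bool} (hx : x ∈ branches (schemeTree e)) :
    ∃ X : ℕ → Bool, ∀ n, x ∈ cylinder (e (initSeg X n)) := by
  choose c hc hxc using he.exists_mem_cylinder_of_length hx
  have hchain : ∀ n, c n <+: c (n + 1) := fun n => by
    have := he.eq_of_mem_cylinder (τ := (c (n + 1)).take n) (by simp [hc]) (hxc n)
      (cylinder_anti (he.mono (List.take_prefix _ _)) (hxc (n + 1)))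
    exact this ▸ List.take_prefix _ _
  obtain ⟨X, hX⟩ := exists_forall_mem_cylinder hchain fun n => (hc n).ge
  refine ⟨X, fun n => ?_⟩
  rw [(initSeg_prefix_of_mem_cylinder (hX n) (hc n).ge).eq_of_length (by simp [hc])]
  exact hxc n

lemma exists_code_ne (he : IsPerfectScheme e) {x y : ℕ → Bool}
    (hx : x ∈ branches (schemeTree e)) (hy : y ∈ branches (schemeTree e)) (hxy : x ≠ y) :
    ∃ X Y : ℕ → Bool, X ≠ Y ∧ (∀ n, x ∈ cylinder (e (initSeg X n))) ∧
      ∀ n, y ∈ cylinder (e (initSeg Y n)) := by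
  obtain ⟨X, hX⟩ := he.exists_code hx
  obtain ⟨Y, hY⟩ := he.exists_code hy
  refine ⟨X, Y, ?_, hX, hY⟩
  rintro rfl
  refine hxy (funext fun i => ?_)
  have hi : i < (e (initSeg X (i + 1))).length := (he.length_le _).trans_lt' (by simp)
  exact (hX (i + 1) i hi).trans (hY (i + 1) i hi).symm

lemma exists_split (he : IsPerfectScheme e) {x y : ℕ → Bool}
    (hx : x ∈ branches (schemeTree e)) (hy : y ∈ branches (schemeTree e)) (hxy : x ≠ y) :
    ∃ ρ i, x ∈ cylinder (e (ρ ++ [i])) ∧ y ∈ cylinder (e (ρ ++ [!i])) := by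
  obtain ⟨X, Y, hXY, hX, hY⟩ := he.exists_code_ne hx hy hxy
  let m := PiNat.firstDiff X Y
  have hm : initSeg X m = initSeg Y m :=
    initSeg_eq_initSeg_iff.2 fun _ hi => PiNat.apply_eq_of_lt_firstDiff hi
  have hYm : Y m = !X m := by
    have := PiNat.apply_firstDiff_ne hXY
    revert this
    cases X m <;> cases Y m <;> simp
  refine ⟨initSeg X m, X m, ?_, ?_⟩
  · rw [← initSeg_succ]
    exact hX (m + 1)
  · rw [hm, ← hYm, ← initSeg_succ]
    exact hY (m + 1)

lemma exists_ne_of_length_gt (he : IsPerfectScheme e) {x y : ℕ → Bool}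
    (hx : x ∈ branches (schemeTree e)) (hy : y ∈ branches (schemeTree e)) (hxy : x ≠ y) (n : ℕ) :
    ∃ a b : List Bool, a.length = b.length ∧ n < a.length ∧ a ≠ b ∧
      x ∈ cylinder (e a) ∧ y ∈ cylinder (e b) := by
  obtain ⟨X, Y, hXY, hX, hY⟩ := he.exists_code_ne hx hy hxy
  obtain ⟨j, hj⟩ := Function.ne_iff.1 hXY
  exact ⟨initSeg X (n + j + 1), initSeg Y (n + j + 1), by simp, by simp,
    fun h => hj (initSeg_eq_initSeg_iff.1 h j (by omega)), hX _, hY _⟩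

end IsPerfectScheme

lemma exists_isPerfectScheme_forall_eq (col : List Bool → Bool) :
    ∃ f, IsPerfectScheme f ∧ ∃ b, ∀ σ, col (f σ) = b := by
  by_cases h : ∃ σ₀, ∀ τ, σ₀ <+: τ → col τ = false
  · obtain ⟨σ₀, hσ₀⟩ := h
    exact ⟨(σ₀ ++ ·), fun σ i => by simp, false, fun σ => hσ₀ _ (List.prefix_append _ _)⟩
  · push Not at h
    choose ext hext hcol using h
    refine ⟨fun σ => σ.foldl (fun t i => ext (t ++ [i])) (ext []),
      fun σ i => by simpa [List.foldl_append] using hext _, true, fun σ => ?_⟩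
    rcases σ.eq_nil_or_concat with rfl | ⟨σ, i, rfl⟩
    · simpa using hcol []
    · simpa [List.foldl_append] using hcol _

/-- `R`, read as a set of pairs of nodes, is dense open in the poset `p × p` ordered by
extension. -/
structure IsDenseOpenRel (p : Set (List Bool)) (R : List Bool → List Bool → Prop) : Prop where
  mono ⦃s t s' t' : List Bool⦄ : s <+: s' → t <+: t' → R s t → R s' t'
  exists_ext ⦃s t : List Bool⦄ : s ∈ p → t ∈ p →
    ∃ s' t', s <+: s' ∧ t <+: t' ∧ s' ∈ p ∧ t' ∈ p ∧ R s' t'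

section Fusion

variable {p : Set (List Bool)} {R : List Bool → List Bool → Prop}

lemma IsDenseOpenRel.exists_forall_pairs {ι : Type*} [DecidableEq ι] (hR : IsDenseOpenRel p R)
    (P : Finset (ι × ι)) (E : ι → List Bool) (hE : ∀ a, E a ∈ p) :
    ∃ E' : ι → List Bool, (∀ a, E a <+: E' a) ∧ (∀ a, E' a ∈ p) ∧
      ∀ ab ∈ P, ab.1 ≠ ab.2 → R (E' ab.1) (E' ab.2) := by
  induction P using Finset.induction_on with
  | empty => exact ⟨E, fun _ => List.prefix_refl _, hE, by simp⟩
  | insert ab P _ ih =>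
    obtain ⟨E₁, hE₁, hE₁p, hE₁R⟩ := ih
    obtain ⟨a, b⟩ := ab
    by_cases hab : a = b
    · refine ⟨E₁, hE₁, hE₁p, fun cd hcd hne => ?_⟩
      rcases Finset.mem_insert.1 hcd with rfl | hcd
      exacts [absurd hab hne, hE₁R cd hcd hne]
    obtain ⟨s, t, hs, ht, hsp, htp, hst⟩ := hR.exists_ext (hE₁p a) (hE₁p b)
    let E₂ := Function.update (Function.update E₁ a s) b t
    have hE₂ : ∀ c, E₁ c <+: E₂ c ∧ E₂ c ∈ p := fun c => by
      simp only [E₂, Function.update_apply]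
      split_ifs with h₁ h₂
      exacts [⟨h₁ ▸ ht, htp⟩, ⟨h₂ ▸ hs, hsp⟩, ⟨List.prefix_refl _, hE₁p c⟩]
    refine ⟨E₂, fun c => (hE₁ c).trans (hE₂ c).1, fun c => (hE₂ c).2, fun cd hcd hne => ?_⟩
    rcases Finset.mem_insert.1 hcd with rfl | hcd
    · simpa [E₂, hab] using hst
    · exact hR.mono (hE₂ _).1 (hE₂ _).1 (hE₁R cd hcd hne)

lemma PerfectTree.exists_next_level (hp : PerfectTree p) (hR : IsDenseOpenRel p R) (n : ℕ)
    (E : List Bool → List Bool) (hE : ∀ σ, Splits p (E σ)) :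
    ∃ E' : List Bool → List Bool, (∀ σ, Splits p (E' σ)) ∧
      (∀ σ i, E σ ++ [i] <+: E' (σ ++ [i])) ∧
      ∀ a b, a.length = n + 1 → b.length = n + 1 → a ≠ b → R (E' a) (E' b) := by
  classical
  -- `E₀ (σ ++ [i]) = E σ ++ [i]`, which lies in `p` because `E σ` splits
  let E₀ : List Bool → List Bool := fun τ => E τ.dropLast ++ [τ.getLastD false]
  let level := (List.finite_length_eq Bool (n + 1)).toFinset
  obtain ⟨E₁, hE₁, hE₁p, hE₁R⟩ := hR.exists_forall_pairs (level ×ˢ level) E₀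
    fun τ => (hE _).append_singleton_mem _
  choose split hsplit using hp.2.2
  refine ⟨fun σ => split (E₁ σ) (hE₁p σ), fun σ => (hsplit _ _).2, fun σ i => ?_,
    fun a b ha hb hab => ?_⟩
  · simpa [E₀] using (hE₁ (σ ++ [i])).trans (hsplit _ (hE₁p _)).1
  · exact hR.mono (hsplit _ _).1 (hsplit _ _).1 (hE₁R (a, b) (by simp [level, ha, hb]) hab)

theorem PerfectTree.exists_isPerfectScheme_of_isDenseOpenRel (hp : PerfectTree p)
    {R : ℕ → List Bool → List Bool → Prop} (hR : ∀ n, IsDenseOpenRel p (R n)) :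
    ∃ e, IsPerfectScheme e ∧ (∀ σ, e σ ∈ p) ∧
      ∀ a b, a.length = b.length → a ≠ b → R a.length (e a) (e b) := by
  choose next hnext_split hnext_ext hnext_R using
    fun n (E : {E : List Bool → List Bool // ∀ σ, Splits p (E σ)}) =>
      hp.exists_next_level (hR (n + 1)) n E.1 E.2
  obtain ⟨r, hr⟩ := hp.1
  obtain ⟨r', -, hr'⟩ := hp.2.2 r hr
  let F : ℕ → {E : List Bool → List Bool // ∀ σ, Splits p (E σ)} := fun n =>
    Nat.rec ⟨fun _ => r', fun _ => hr'⟩ (fun n E => ⟨next n E, hnext_split n E⟩) n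
  refine ⟨fun σ => (F σ.length).1 σ, fun σ i => ?_, fun σ => ((F σ.length).2 σ).1,
    fun a b hab hne => ?_⟩
  · simpa using hnext_ext σ.length (F σ.length) σ i
  · obtain ⟨n, hn⟩ : ∃ n, a.length = n + 1 := Nat.exists_eq_succ_of_ne_zero fun h => hne <| by
      rw [List.length_eq_zero_iff.1 h, List.length_eq_zero_iff.1 (hab.symm.trans h)]
    show R a.length ((F a.length).1 a) ((F b.length).1 b)
    rw [← hab, hn]
    exact hnext_R n (F n) a b hn (hab ▸ hn) hne

end Fusion

section Box

variable {p : Set (List Bool)}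

def box (p : Set (List Bool)) (s t : List Bool) : Set (branches p × branches p) :=
  (Subtype.val ⁻¹' cylinder s) ×ˢ (Subtype.val ⁻¹' cylinder t)

lemma isOpen_box (s t : List Bool) : IsOpen (box p s t) :=
  ((isOpen_cylinder s).preimage continuous_subtype_val).prod
    ((isOpen_cylinder t).preimage continuous_subtype_val)

lemma box_anti {s t s' t' : List Bool} (hs : s <+: s') (ht : t <+: t') :
    box p s' t' ⊆ box p s t :=
  prod_mono (preimage_mono (cylinder_anti hs)) (preimage_mono (cylinder_anti ht))

lemma PerfectTree.box_nonempty (hp : PerfectTree p) {s t : List Bool} (hs : s ∈ p) (ht : t ∈ p) :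
    (box p s t).Nonempty := by
  obtain ⟨x, hxp, hx⟩ := hp.exists_mem_branches_cylinder hs
  obtain ⟨y, hyp, hy⟩ := hp.exists_mem_branches_cylinder ht
  exact ⟨(⟨x, hxp⟩, ⟨y, hyp⟩), hx, hy⟩

lemma hasBasis_nhds_box (z : branches p × branches p) :
    (𝓝 z).HasBasis (fun _ : ℕ => True) fun n => box p (initSeg z.1.1 n) (initSeg z.2.1 n) := by
  have hval : IsInducing (Prod.map Subtype.val Subtype.val : branches p × branches p → _) :=
    IsInducing.subtypeVal.prodMap IsInducing.subtypeVal
  rw [hval.nhds_eq_comap, Prod.map_apply, nhds_prod_eq]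
  exact ((hasBasis_nhds_cylinder _).prod_same_index_anti (hasBasis_nhds_cylinder _)
    (fun _ _ _ _ h => cylinder_anti (initSeg_prefix_initSeg _ h))
    (fun _ _ _ _ h => cylinder_anti (initSeg_prefix_initSeg _ h))).comap _

lemma exists_box_subset {W : Set (branches p × branches p)} (hW : IsOpen W)
    {z : branches p × branches p} (hzW : z ∈ W) {s t : List Bool} (hz : z ∈ box p s t) :
    ∃ s' t', s <+: s' ∧ t <+: t' ∧ s' ∈ p ∧ t' ∈ p ∧ box p s' t' ⊆ W := by
  obtain ⟨n, -, hn⟩ := (hasBasis_nhds_box z).mem_iff.1 (hW.mem_nhds hzW)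
  let m := max n (max s.length t.length)
  refine ⟨initSeg z.1.1 m, initSeg z.2.1 m, prefix_initSeg_of_mem_cylinder hz.1 (by omega),
    prefix_initSeg_of_mem_cylinder hz.2 (by omega), z.1.2 m, z.2.2 m, ?_⟩
  exact (box_anti (initSeg_prefix_initSeg _ (le_max_left _ _))
    (initSeg_prefix_initSeg _ (le_max_left _ _))).trans hn

end Box

section Decision

variable {p : Set (List Bool)}

lemma PerfectTree.isDenseOpenRel_box_subset (hp : PerfectTree p)
    {g : ℕ → Set (branches p × branches p)} (hg : ∀ k, IsOpen (g k)) (hgd : Dense (⋂ k, g k))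
    {U V : Set (branches p × branches p)} (hU : IsOpen U) (hV : IsOpen V)
    (hUV : ⋂ k, g k ⊆ U ∪ V) (n : ℕ) :
    IsDenseOpenRel p fun s t => (∀ k < n, box p s t ⊆ g k) ∧ (box p s t ⊆ U ∨ box p s t ⊆ V) where
  mono _ _ _ _ hs ht h := ⟨fun k hk => (box_anti hs ht).trans (h.1 k hk),
    h.2.imp (box_anti hs ht).trans (box_anti hs ht).trans⟩
  exists_ext s t hs ht := by
    obtain ⟨z, hzg, hz⟩ := hgd.exists_mem_open (isOpen_box s t) (hp.box_nonempty hs ht)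
    obtain ⟨W, hW, hzW, hWUV⟩ : ∃ W, IsOpen W ∧ z ∈ W ∧ (W ⊆ U ∨ W ⊆ V) := by
      rcases hUV hzg with hzU | hzV
      exacts [⟨U, hU, hzU, Or.inl subset_rfl⟩, ⟨V, hV, hzV, Or.inr subset_rfl⟩]
    have hgn : IsOpen (⋂ k ∈ {k | k < n}, g k) := (finite_lt_nat n).isOpen_biInter fun k _ => hg k
    obtain ⟨s', t', hss', htt', hs', ht', hsub⟩ :=
      exists_box_subset (hgn.inter hW) ⟨mem_iInter₂.2 fun k _ => mem_iInter.1 hzg k, hzW⟩ hz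
    refine ⟨s', t', hss', htt', hs', ht', fun k hk => ?_, ?_⟩
    · exact hsub.trans (inter_subset_left.trans (biInter_subset_of_mem hk))
    · exact hWUV.imp (hsub.trans inter_subset_right).trans (hsub.trans inter_subset_right).trans

theorem PerfectTree.exists_isPerfectScheme_decided (hp : PerfectTree p)
    {D U V : Set (branches p × branches p)} (hD : IsGδ D) (hDd : Dense D)
    (hU : IsOpen U) (hV : IsOpen V) (hDUV : D ⊆ U ∪ V) :
    ∃ e, IsPerfectScheme e ∧ (∀ σ, e σ ∈ p) ∧
      (∀ z : branches p × branches p, z.1.1 ∈ branches (schemeTree e) →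
        z.2.1 ∈ branches (schemeTree e) → z.1 ≠ z.2 → z ∈ D) ∧
      ∀ ρ, box p (e (ρ ++ [false])) (e (ρ ++ [true])) ⊆ U ∨
        box p (e (ρ ++ [false])) (e (ρ ++ [true])) ⊆ V := by
  obtain ⟨g, hg, rfl⟩ := hD.eq_iInter_nat
  obtain ⟨e, he, hep, heR⟩ :=
    hp.exists_isPerfectScheme_of_isDenseOpenRel (hp.isDenseOpenRel_box_subset hg hDd hU hV hDUV)
  refine ⟨e, he, hep, fun z hx hy hxy => mem_iInter.2 fun k => ?_,
    fun ρ => (heR _ _ (by simp) (by simp)).2⟩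
  obtain ⟨a, b, hab, hka, hne, hxa, hyb⟩ :=
    he.exists_ne_of_length_gt hx hy (Subtype.val_injective.ne hxy) k
  exact (heR a b hab hne).1 k hka ⟨hxa, hyb⟩

theorem PerfectTree.exists_isPerfectScheme_color (hp : PerfectTree p)
    {A : Set (branches p × branches p)} (hA : BaireMeasurableSet A) :
    ∃ e, IsPerfectScheme e ∧ (∀ σ, e σ ∈ p) ∧ ∃ col : List Bool → Bool,
      ∀ ρ, ∀ z ∈ box p (e (ρ ++ [false])) (e (ρ ++ [true])),
        z.1.1 ∈ branches (schemeTree e) → z.2.1 ∈ branches (schemeTree e) →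
          (z ∈ A ↔ col ρ = true) := by
  classical
  obtain ⟨U, hU, hAU⟩ := hA.residualEq_isOpen
  obtain ⟨V, hV, hAV⟩ := hA.compl.residualEq_isOpen
  obtain ⟨D, hD, hDd, hDAUV⟩ := eventually_residual.1 (hAU.and hAV)
  replace hDAUV : ∀ z ∈ D, (z ∈ A ↔ z ∈ U) ∧ (z ∉ A ↔ z ∈ V) :=
    fun z hz => ⟨Iff.of_eq (hDAUV z hz).1, Iff.of_eq (hDAUV z hz).2⟩
  have hDUV : D ⊆ U ∪ V := fun z hz => by
    by_cases hzA : z ∈ A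
    exacts [Or.inl ((hDAUV z hz).1.1 hzA), Or.inr ((hDAUV z hz).2.1 hzA)]
  obtain ⟨e, he, hep, heD, heUV⟩ := hp.exists_isPerfectScheme_decided hD hDd hU hV hDUV
  refine ⟨e, he, hep, fun ρ => decide (box p (e (ρ ++ [false])) (e (ρ ++ [true])) ⊆ U),
    fun ρ z hz hx hy => ?_⟩
  have hne : z.1 ≠ z.2 := fun h => by
    have h₁ := he.apply_length_eq hz.1
    have h₂ := he.apply_length_eq hz.2
    rw [h] at h₁
    exact Bool.false_ne_true (h₁.symm.trans h₂)
  obtain ⟨hzAU, hzAV⟩ := hDAUV z (heD z hx hy hne)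
  rw [decide_eq_true_iff]
  rcases heUV ρ with h | h
  · exact iff_of_true (hzAU.2 (h hz)) h
  · have hzA : z ∉ A := hzAV.2 (h hz)
    exact iff_of_false hzA fun hU => hzA (hzAU.2 (hU hz))

end Decision

/-- **Galvin's theorem for Sacks forcing.**  A coloring of pairs from `[p]` is given as
a symmetric map `c`; Baire measurability of the coloring is expressed as the Baire
property (in the subspace `[p] × [p]`) of the set of pairs colored `1` (equivalently,
preimages of points have the Baire property).  Conclusion: there is a perfect subtree
`q ⊆ p` with `[q]` homogeneous for `c`. -/
theorem galvin_sacks (p : Set (List Bool)) (hp : PerfectTree p)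
    (c : (ℕ → Bool) → (ℕ → Bool) → Bool)
    (hsymm : ∀ x y, c x y = c y x)
    (hBaire : BaireMeasurableSet
      {z : branches p × branches p | c z.1.1 z.2.1 = true}) :
    ∃ q, PerfectTree q ∧ q ⊆ p ∧ ∃ b : Bool,
      ∀ x ∈ branches q, ∀ y ∈ branches q, x ≠ y → c x y = b := by
  obtain ⟨e, he, hep, col, hcol⟩ := hp.exists_isPerfectScheme_color hBaire
  obtain ⟨f, hf, b, hfb⟩ := exists_isPerfectScheme_forall_eq col
  have hef := he.comp hf
  have hq : schemeTree (e ∘ f) ⊆ schemeTree e := schemeTree_comp_subset e f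
  have hep' : schemeTree e ⊆ p := schemeTree_subset hp.2.1 hep
  refine ⟨schemeTree (e ∘ f), hef.perfectTree_schemeTree, hq.trans hep', b, ?_⟩
  intro x hx y hy hxy
  obtain ⟨ρ, i, hxρ, hyρ⟩ := hef.exists_split hx hy hxy
  have hx' := cylinder_anti (he.mono (hf ρ i)) hxρ
  have hy' := cylinder_anti (he.mono (hf ρ !i)) hyρ
  have hxe := branches_mono hq hx
  have hye := branches_mono hq hy
  rw [← hfb ρ, Bool.eq_iff_iff]
  cases i
  · exact hcol (f ρ) (⟨x, branches_mono hep' hxe⟩, ⟨y, branches_mono hep' hye⟩) ⟨hx', hy'⟩ hxe hye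
  · rw [hsymm]
    exact hcol (f ρ) (⟨y, branches_mono hep' hye⟩, ⟨x, branches_mono hep' hxe⟩) ⟨hy', hx'⟩ hye hxe
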